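/- arXiv:1504.07306 — 3 statements merged into one kernel-verified Lean document; each statement's English description precedes it below -/
import Mathlib

section
/- Let c, τ > 0 and define E : ℂ⁵ → ℝ by E(ψ) = (5c/(14π))·((Σ_{m} |ψ_m|² - τ)² - τ² + (1/2)|Σ_m ψ_m²|²). Then min E = -(5c/(14π))τ², and the set of minimizers is exactly {ψ ∈ ℂ⁵ : Σ_m |ψ_m|² = τ and Σ_m ψ_m² = 0}. -/
/-! Up to the positive factor `K = 5c/(14π)`, `E ψ + K τ²` is the sum of squares
`(∑ |ψ_m|² - τ)² + ½ |∑ ψ_m²|²`, so `E ≥ -K τ²` with equality exactly when both squares vanish.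
The bound is attained, e.g. by `ψ = √(τ/2) (1, i, 0, 0, 0)`. -/

/-- The energy as a function of `s = ∑ |ψ_m|²` and `q = |∑ ψ_m²|`. -/
noncomputable def glEnergy (K τ s q : ℝ) : ℝ := K * ((s - τ) ^ 2 - τ ^ 2 + 1 / 2 * q ^ 2)

theorem neg_mul_sq_le_glEnergy {K : ℝ} (hK : 0 ≤ K) (τ s q : ℝ) :
    -K * τ ^ 2 ≤ glEnergy K τ s q := by
  unfold glEnergy
  nlinarith [mul_nonneg hK (add_nonneg (sq_nonneg (s - τ)) (sq_nonneg q))]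

theorem glEnergy_eq_neg_mul_sq_iff {K : ℝ} (hK : 0 < K) (τ s q : ℝ) :
    glEnergy K τ s q = -K * τ ^ 2 ↔ s = τ ∧ q = 0 := by
  have hsum : glEnergy K τ s q = -K * τ ^ 2 ↔ (s - τ) ^ 2 + 1 / 2 * q ^ 2 = 0 := by
    unfold glEnergy
    constructor
    · intro h
      exact mul_left_cancel₀ hK.ne' (by linear_combination h)
    · intro h
      linear_combination K * h
  rw [hsum, add_eq_zero_iff_of_nonneg (sq_nonneg _) (by positivity)]
  simp [sub_eq_zero]

theorem exists_sum_norm_sq_eq_and_sum_sq_eq_zero {ι : Type*} [Fintype ι] [Nontrivial ι]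
    {τ : ℝ} (hτ : 0 ≤ τ) : ∃ ψ : ι → ℂ, ∑ m, ‖ψ m‖ ^ 2 = τ ∧ ∑ m, ψ m ^ 2 = 0 := by
  classical
  obtain ⟨i, j, hij⟩ := exists_pair_ne ι
  set a : ℝ := Real.sqrt (τ / 2)
  have ha : a ^ 2 = τ / 2 := Real.sq_sqrt (by linarith)
  let ψ : ι → ℂ := fun m => if m = i then a else if m = j then a * Complex.I else 0
  have hψ : ∀ m, m ≠ i ∧ m ≠ j → ψ m = 0 := fun m hm => by simp [ψ, hm.1, hm.2]
  refine ⟨ψ, ?_, ?_⟩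
  · rw [Fintype.sum_eq_add i j hij (fun m hm => by simp [hψ m hm])]
    simp only [ψ, if_pos rfl, if_neg hij.symm, if_true, norm_mul, Complex.norm_real, Complex.norm_I,
      mul_one, Real.norm_eq_abs, sq_abs, ha]
    ring
  · rw [Fintype.sum_eq_add i j hij (fun m hm => by simp [hψ m hm])]
    simp only [ψ, if_pos rfl, if_neg hij.symm, if_true, mul_pow, Complex.I_sq]
    ring

theorem stmt8 (c τ : ℝ) (hc : 0 < c) (hτ : 0 < τ)
    (E : (Fin 5 → ℂ) → ℝ)
    (hE : ∀ ψ, E ψ = (5*c/(14*Real.pi)) *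
      ((∑ m, ‖ψ m‖^2 - τ)^2 - τ^2
        + (1/2) * ‖∑ m, (ψ m)^2‖^2)) :
    IsLeast (Set.range E) (-(5*c/(14*Real.pi)) * τ^2) ∧
    ∀ ψ, E ψ = -(5*c/(14*Real.pi)) * τ^2 ↔
      ((∑ m, ‖ψ m‖^2) = τ ∧ (∑ m, (ψ m)^2) = 0) := by
  have hK : 0 < 5*c/(14*Real.pi) := by positivity
  have hE' : ∀ ψ, E ψ = glEnergy (5*c/(14*Real.pi)) τ (∑ m, ‖ψ m‖^2) ‖∑ m, (ψ m)^2‖ := hE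
  obtain ⟨ψ₀, hS, hQ⟩ := exists_sum_norm_sq_eq_and_sum_sq_eq_zero (ι := Fin 5) hτ.le
  refine ⟨⟨⟨ψ₀, ?_⟩, ?_⟩, fun ψ => ?_⟩
  · rw [hE', glEnergy_eq_neg_mul_sq_iff hK]
    simp [hS, hQ]
  · rintro _ ⟨ψ, rfl⟩
    rw [hE']
    exact neg_mul_sq_le_glEnergy hK.le _ _ _
  · rw [hE', glEnergy_eq_neg_mul_sq_iff hK, norm_eq_zero]
end

section
/- Let c, d > 0 and define E : ℂ² → ℝ by E(ψ₁, ψ₂) = (c/(2π))·((|ψ₁|² + |ψ₂|² - πd/c)² - π²d²/c² + (1/2)|ψ₁² + ψ₂²|²). Then min E = -πd²/(2c) and the set of minimizers equals {(ψ, ±iψ) : ψ ∈ ℂ, |ψ|² = πd/(2c)}. -/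
/-!
Writing `κ = c/(2π)` and `μ = πd/c`, the energy is `κ((s - μ)² - μ² + ½|p|²)` with
`s = |ψ₁|² + |ψ₂|²` and `p = ψ₁² + ψ₂²`, so it is at least `-κμ² = -πd²/(2c)`, with equality
exactly when `s = μ` and `p = 0`. Over `ℂ`, `p = 0` means `ψ₂ = ±iψ₁`, hence `|ψ₂| = |ψ₁|` and
`s = μ` becomes `|ψ₁|² = μ/2`.
-/

open Complex

noncomputable def dWaveEnergy (κ μ : ℝ) (ψ₁ ψ₂ : ℂ) : ℝ :=
  κ * ((‖ψ₁‖ ^ 2 + ‖ψ₂‖ ^ 2 - μ) ^ 2 - μ ^ 2 + (1 / 2) * ‖ψ₁ ^ 2 + ψ₂ ^ 2‖ ^ 2)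

section

variable {κ μ : ℝ} {ψ₁ ψ₂ : ℂ}

theorem neg_mul_sq_le_dWaveEnergy (hκ : 0 ≤ κ) : -(κ * μ ^ 2) ≤ dWaveEnergy κ μ ψ₁ ψ₂ := by
  unfold dWaveEnergy
  nlinarith [mul_nonneg hκ (sq_nonneg (‖ψ₁‖ ^ 2 + ‖ψ₂‖ ^ 2 - μ)),
    mul_nonneg hκ (sq_nonneg ‖ψ₁ ^ 2 + ψ₂ ^ 2‖)]

theorem dWaveEnergy_eq_neg_mul_sq_iff (hκ : 0 < κ) :
    dWaveEnergy κ μ ψ₁ ψ₂ = -(κ * μ ^ 2) ↔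
      ‖ψ₁‖ ^ 2 + ‖ψ₂‖ ^ 2 = μ ∧ ψ₁ ^ 2 + ψ₂ ^ 2 = 0 := by
  have hsplit : dWaveEnergy κ μ ψ₁ ψ₂ + κ * μ ^ 2 =
      κ * ((‖ψ₁‖ ^ 2 + ‖ψ₂‖ ^ 2 - μ) ^ 2 + (1 / 2) * ‖ψ₁ ^ 2 + ψ₂ ^ 2‖ ^ 2) := by
    unfold dWaveEnergy; ring
  rw [← add_eq_zero_iff_eq_neg, hsplit, mul_eq_zero_iff_left hκ.ne',
    add_eq_zero_iff_of_nonneg (sq_nonneg _) (by positivity)]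
  simp [sub_eq_zero]

theorem isLeast_dWaveEnergy (hκ : 0 < κ) (hμ : 0 ≤ μ) :
    IsLeast {x : ℝ | ∃ ψ₁ ψ₂, x = dWaveEnergy κ μ ψ₁ ψ₂} (-(κ * μ ^ 2)) := by
  refine ⟨?_, fun x ⟨ψ₁, ψ₂, hx⟩ => hx ▸ neg_mul_sq_le_dWaveEnergy hκ.le⟩
  set r : ℂ := (Real.sqrt (μ / 2) : ℂ)
  have hr : ‖r‖ ^ 2 = μ / 2 := by
    rw [Complex.norm_of_nonneg (Real.sqrt_nonneg _), Real.sq_sqrt (by positivity)]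
  refine ⟨r, I * r, ((dWaveEnergy_eq_neg_mul_sq_iff hκ).mpr ⟨?_, ?_⟩).symm⟩
  · rw [norm_mul, norm_I, one_mul, hr]; ring
  · linear_combination r ^ 2 * I_sq

end

theorem sq_add_sq_eq_zero_iff_eq_I_mul {z w : ℂ} :
    z ^ 2 + w ^ 2 = 0 ↔ w = I * z ∨ w = -(I * z) := by
  rw [← sq_eq_sq_iff_eq_or_eq_neg]
  constructor <;> intro h
  · linear_combination h - z ^ 2 * I_sq
  · linear_combination h + z ^ 2 * I_sq

theorem normSq_sum_eq_and_sq_add_sq_eq_zero_iff {μ : ℝ} {ψ₁ ψ₂ : ℂ} :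
    (‖ψ₁‖ ^ 2 + ‖ψ₂‖ ^ 2 = μ ∧ ψ₁ ^ 2 + ψ₂ ^ 2 = 0) ↔
      ∃ ψ : ℂ, ‖ψ‖ ^ 2 = μ / 2 ∧ ((ψ₁ = ψ ∧ ψ₂ = I * ψ) ∨ (ψ₁ = ψ ∧ ψ₂ = -(I * ψ))) := by
  rw [sq_add_sq_eq_zero_iff_eq_I_mul]
  constructor
  · rintro ⟨hs, hp⟩
    have hnorm : ‖ψ₂‖ = ‖ψ₁‖ := by rcases hp with rfl | rfl <;> simp
    exact ⟨ψ₁, by rw [hnorm] at hs; linarith, by tauto⟩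
  · rintro ⟨ψ, hψ, ⟨rfl, rfl⟩ | ⟨rfl, rfl⟩⟩ <;> simp [hψ]

theorem stmt9 (c d : ℝ) (hc : 0 < c) (hd : 0 < d)
    (E : ℂ → ℂ → ℝ)
    (hE : ∀ ψ₁ ψ₂, E ψ₁ ψ₂ = (c/(2*Real.pi)) *
      ((‖ψ₁‖^2 + ‖ψ₂‖^2 - Real.pi*d/c)^2 - Real.pi^2*d^2/c^2
        + (1/2) * ‖ψ₁^2 + ψ₂^2‖^2)) :
    IsLeast {x : ℝ | ∃ ψ₁ ψ₂, x = E ψ₁ ψ₂} (-(Real.pi*d^2/(2*c))) ∧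
    ∀ ψ₁ ψ₂, E ψ₁ ψ₂ = -(Real.pi*d^2/(2*c)) ↔
      ∃ ψ : ℂ, ‖ψ‖^2 = Real.pi*d/(2*c) ∧
        ((ψ₁ = ψ ∧ ψ₂ = Complex.I*ψ) ∨ (ψ₁ = ψ ∧ ψ₂ = -(Complex.I*ψ))) := by
  have hκ : 0 < c / (2 * Real.pi) := by positivity
  have hμ : 0 ≤ Real.pi * d / c := by positivity
  have hE' : E = dWaveEnergy (c / (2 * Real.pi)) (Real.pi * d / c) := by
    ext ψ₁ ψ₂
    rw [hE, dWaveEnergy, div_pow, mul_pow]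
  have hmin : Real.pi * d ^ 2 / (2 * c) = c / (2 * Real.pi) * (Real.pi * d / c) ^ 2 := by
    field_simp
  have hhalf : Real.pi * d / (2 * c) = Real.pi * d / c / 2 := by ring
  rw [hE', hmin, hhalf]
  exact ⟨isLeast_dWaveEnergy hκ hμ, fun ψ₁ ψ₂ =>
    (dWaveEnergy_eq_neg_mul_sq_iff hκ).trans normSq_sum_eq_and_sq_add_sq_eq_zero_iff⟩
end

section
/- Let x₀ > 0 and let (a_l) be a finite sequence indexed by integers l with l₀ ≥ l ≥ l_min, satisfying the backward recurrence a_{l-1} = (2(l+1/2)/x₀)·a_l - a_{l+1}, the initial conditions a_{l₀} = 1 and a_{l₀-1} = (l₀+1/2)/x₀ with (l₀+1/2)/x₀ < 1, and a_l ≥ 0 for all l in the range. Then a_l < a_{l+1} < 1 for all l < l₀ in the range; in particular a_l < 1 for all l < l₀. -/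
theorem stmt14 (x₀ : ℝ) (hx₀ : 0 < x₀) (lmin l₀ : ℤ) (hle : lmin ≤ l₀)
    (a : ℤ → ℝ)
    (hrec : ∀ l : ℤ, lmin < l → l < l₀ →
      a (l - 1) = (2*((l:ℝ) + 1/2)/x₀) * a l - a (l + 1))
    (hinit : a l₀ = 1)
    (hinit' : a (l₀ - 1) = ((l₀:ℝ) + 1/2)/x₀)
    (hlt : ((l₀:ℝ) + 1/2)/x₀ < 1)
    (hnonneg : ∀ l : ℤ, lmin ≤ l → l ≤ l₀ → 0 ≤ a l) :
    (∀ l : ℤ, lmin ≤ l → l < l₀ → a l < a (l + 1)) ∧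
    (∀ l : ℤ, lmin ≤ l → l < l₀ → a l < 1) := by
  have key : ∀ n : ℕ, ∀ l : ℤ, l = l₀ - 1 - n → lmin ≤ l →
      a l < a (l + 1) ∧ a (l + 1) ≤ 1 := by
    intro n
    induction n with
    | zero =>
      intro l hl _
      simp only [Nat.cast_zero, sub_zero] at hl
      subst hl
      constructor
      · rw [hinit', sub_add_cancel, hinit]; exact hlt
      · rw [sub_add_cancel, hinit]
    | succ n ih =>
      intro l hl hmin
      have hl1 : l + 1 = l₀ - 1 - n := by push_cast at hl ⊢; omega
      have hmin1 : lmin ≤ l + 1 := by omega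
      obtain ⟨h1, h2⟩ := ih (l + 1) hl1 hmin1
      have hlt1 : a (l + 1) ≤ 1 := le_of_lt (lt_of_lt_of_le h1 h2)
      have hl1lt : l + 1 < l₀ := by omega
      have hrec' := hrec (l + 1) (by omega) hl1lt
      have hal : a l = (2 * (((l:ℝ)+1) + 1/2) / x₀) * a (l + 1) - a (l + 2) := by
        have : (l + 1 : ℤ) - 1 = l := by ring
        rw [this] at hrec'
        have h2' : (l + 1 : ℤ) + 1 = l + 2 := by ring
        rw [h2'] at hrec'
        push_cast at hrec' ⊢
        linarith [hrec']
      have hcoef : ((l:ℝ) + 1 + 1/2) / x₀ < 1 := by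
        have hle2 : ((l:ℝ) + 1 + 1/2) ≤ ((l₀:ℝ) + 1/2) := by
          have h' : (l:ℝ) + 1 ≤ (l₀:ℝ) := by exact_mod_cast (le_of_lt hl1lt)
          linarith
        calc ((l:ℝ) + 1 + 1/2) / x₀ ≤ ((l₀:ℝ) + 1/2) / x₀ := by gcongr
          _ < 1 := hlt
      have hnn : 0 ≤ a (l + 1) := hnonneg (l + 1) hmin1 (by omega)
      have hstep : a l < a (l + 1) := by
        have h2a : 2 * (((l:ℝ)+1) + 1/2) / x₀ * a (l + 1) ≤ 2 * a (l + 1) := by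
          have : 2 * (((l:ℝ)+1) + 1/2) / x₀ ≤ 2 := by
            have : 2 * (((l:ℝ)+1) + 1/2) / x₀ = 2 * (((l:ℝ)+1+1/2) / x₀) := by ring
            rw [this]; linarith
          nlinarith
        calc a l = 2 * (((l:ℝ)+1) + 1/2) / x₀ * a (l + 1) - a (l + 2) := hal
          _ ≤ 2 * a (l + 1) - a (l + 2) := by linarith
          _ < 2 * a (l + 1) - a (l + 1) := by
              have : a (l + 1 + 1) = a (l + 2) := by norm_num; ring_nf
              linarith [h1, this]
          _ = a (l + 1) := by ring
      exact ⟨hstep, hlt1⟩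
  have main : ∀ l : ℤ, lmin ≤ l → l < l₀ → a l < a (l + 1) ∧ a (l + 1) ≤ 1 := by
    intro l hmin hlt'
    apply key (l₀ - 1 - l).toNat l _ hmin
    have : ((l₀ - 1 - l).toNat : ℤ) = l₀ - 1 - l := Int.toNat_of_nonneg (by omega)
    omega
  constructor
  · intro l h1 h2; exact (main l h1 h2).1
  · intro l h1 h2
    obtain ⟨ha, hb⟩ := main l h1 h2
    linarith
end
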